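/- Let E be a field and σ : E → E a ring automorphism with σ∘σ = id and σ ≠ id; let F = {x ∈ E : σ(x) = x} be its fixed field. Let n ≥ 1. Define an action of the group (E^×)ⁿ × F^×, with coordinates (a_1,…,a_n,a_0), on the set (E^×)^{n−1} × F^×, with coordinates (k_1,…,k_{n−1},k_n), by (a·k)_i = a_i a_{i+1}^{-1} k_i for 1 ≤ i ≤ n−1 and (a·k)_n = a_0^{-1} a_n σ(a_n) k_n. Then this action is transitive: every tuple can be moved to (1, …, 1). -/

import Mathlib

/-!
With `a_{n-1} = 1` the last equation reads `a0 = k_{n-1}`, an admissible choice as `k_{n-1}` is σ-fixed.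
The remaining equations `a_i a_{i+1}⁻¹ k_i = 1` are solved by the tail products
`a_i = (k_i ⋯ k_{n-2})⁻¹`.
-/

open Finset

theorem exists_mul_inv_succ_mul_eq_one {G : Type*} [CommGroup G] (k : ℕ → G) (m : ℕ) :
    ∃ a : ℕ → G, a m = 1 ∧ ∀ i < m, a i * (a (i + 1))⁻¹ * k i = 1 := by
  refine ⟨fun i => (∏ j ∈ Ico i m, k j)⁻¹, by simp, fun i hi => ?_⟩
  simp [prod_eq_prod_Ico_succ_bot hi]

/-- The torus action on Whittaker data for the quasi-split unitary similitude group
`GU_{2n}(F)` (`E/F` quadratic with involution `σ`): coefficients satisfy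
`k_0, …, k_{n-2} ∈ E^×` and `k_{n-1} ∈ F^×` (σ-fixed); the torus has coordinates
`a_0, …, a_{n-1} ∈ E^×` and a similitude coordinate `a0 ∈ F^×`, acting by
`(a·k)_i = a_i a_{i+1}⁻¹ k_i` for `i < n-1` and
`(a·k)_{n-1} = a0⁻¹ a_{n-1} σ(a_{n-1}) k_{n-1}`. This action is transitive. -/
theorem stmt_14 (E : Type*) [Field E] (σ : E →+* E)
    (n : ℕ) (hn : 0 < n)
    (k : Fin n → E) (hk0 : ∀ i, k i ≠ 0)
    (hkF : σ (k ⟨n - 1, by omega⟩) = k ⟨n - 1, by omega⟩) :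
    ∃ (a : Fin n → E) (a0 : E), (∀ i, a i ≠ 0) ∧ a0 ≠ 0 ∧ σ a0 = a0 ∧
      ∀ i : Fin n,
        (if h : (i : ℕ) + 1 < n then a i * (a ⟨(i : ℕ) + 1, h⟩)⁻¹ * k i
         else a0⁻¹ * a i * σ (a i) * k i) = 1 := by
  let u : ℕ → Eˣ := fun j => if h : j < n then Units.mk0 (k ⟨j, h⟩) (hk0 _) else 1
  obtain ⟨a, ha_last, ha⟩ := exists_mul_inv_succ_mul_eq_one u (n - 1)
  refine ⟨fun i => a i, k ⟨n - 1, by omega⟩, fun i => (a i).ne_zero, hk0 _, hkF, fun i => ?_⟩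
  split_ifs with h
  · simpa [u, h] using congrArg Units.val (ha i (by omega))
  · rw [show i = ⟨n - 1, by omega⟩ from Fin.ext (by simp only; omega)]
    simp [ha_last, hk0]
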